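/- arXiv:1012.2287 — 2 statements merged into one kernel-verified Lean document; each statement's English description precedes it below -/
import Mathlib

section
/- Let 1 ≤ p < 2 < q < ∞ and let α ∈ (0,1) satisfy 1/2 = α/p + (1-α)/q. There is a constant C = C(p,q) such that for every ω ∈ L^p(ℝ²) ∩ L^q(ℝ²) and every x ∈ ℝ², the integral ∫_{ℝ²} ‖K(x-y)‖ |ω(y)| dy converges and is bounded by C ‖ω‖_{L^p}^{α} ‖ω‖_{L^q}^{1-α}; in particular the Biot–Savart velocity v = K ∗ ω satisfies ‖v‖_{L^∞(ℝ²)} ≤ C ‖ω‖_{L^p}^{α} ‖ω‖_{L^q}^{1-α}. -/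
open MeasureTheory Real ENNReal

/-- The 2D Biot–Savart kernel `K(x) = (1/(2π)) x^⊥ / ‖x‖²`, where `x^⊥ = (-x₂, x₁)`. -/
noncomputable def biotSavartKernel (x : EuclideanSpace ℝ (Fin 2)) : EuclideanSpace ℝ (Fin 2) :=
  (2 * π * ‖x‖ ^ 2)⁻¹ • (WithLp.equiv 2 (Fin 2 → ℝ)).symm ![-(x 1), x 0]

/-! Split the integral `∫ ‖x - y‖⁻¹ |ω y| dy` at `‖x - y‖ = R`. On the disc, Hölder with the
exponents `q' = q / (q - 1) < 2` and `q` bounds it by `c R ^ (1 - 2/q) ‖ω‖_q`, because `‖z‖ ^ (-q')`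
is integrable near `0` in the plane. Off the disc, Hölder with `p' = p / (p - 1) > 2` and `p` (the
sup bound `R⁻¹` when `p = 1`) bounds it by `c R ^ (1 - 2/p) ‖ω‖_p`, because `‖z‖ ^ (-p')` is
integrable at infinity. The two powers of `R` have opposite signs, and the radius that makes the two
terms equal turns their sum into `C ‖ω‖_p ^ α ‖ω‖_q ^ (1 - α)`, with `α` forced by
`1/2 = α/p + (1 - α)/q`. -/

open Set Metric

theorem lintegral_Ioc_zero_rpow {t R : ℝ} (ht : -1 < t) (hR : 0 ≤ R) :
    ∫⁻ y in Ioc 0 R, ENNReal.ofReal (y ^ t) = ENNReal.ofReal (R ^ (t + 1) / (t + 1)) := by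
  rw [← ofReal_integral_eq_lintegral_ofReal
      ((intervalIntegral.intervalIntegrable_rpow' ht).1)
      ((ae_restrict_mem measurableSet_Ioc).mono fun y hy => rpow_nonneg hy.1.le t),
    ← intervalIntegral.integral_of_le hR, integral_rpow (.inl ht),
    zero_rpow (by linarith), sub_zero]

theorem lintegral_Ioi_rpow {t R : ℝ} (ht : t < -1) (hR : 0 < R) :
    ∫⁻ y in Ioi R, ENNReal.ofReal (y ^ t) = ENNReal.ofReal (-R ^ (t + 1) / (t + 1)) := by
  rw [← ofReal_integral_eq_lintegral_ofReal (integrableOn_Ioi_rpow_of_lt ht hR)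
      ((ae_restrict_mem measurableSet_Ioi).mono fun y hy => rpow_nonneg (hR.trans hy).le t),
    integral_Ioi_rpow_of_lt ht hR]

theorem ofReal_pow_mul_ofReal_rpow {y : ℝ} (hy : 0 < y) (n : ℕ) (t : ℝ) :
    ENNReal.ofReal (y ^ n) * ENNReal.ofReal (y ^ t) = ENNReal.ofReal (y ^ (t + n)) := by
  rw [← ENNReal.ofReal_mul (by positivity), rpow_add_natCast hy.ne', mul_comm]

theorem ofReal_mul_rpow_rpow_one_div {A R s r : ℝ} (hA : 0 ≤ A) (hR : 0 ≤ R) (hr : 0 < r) :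
    ENNReal.ofReal (A * R ^ s) ^ (1 / r) = ENNReal.ofReal (A ^ (1 / r) * R ^ (s / r)) := by
  rw [ofReal_rpow_of_nonneg (by positivity) (by positivity), mul_rpow hA (by positivity),
    ← rpow_mul hR, mul_one_div]

theorem Real.HolderConjugate.two_sub_div_eq {r q : ℝ} (hr : r.HolderConjugate q) :
    (2 - r) / r = 1 - 2 / q := by
  rw [sub_div, div_self hr.ne_zero, div_eq_mul_inv 2 r, ← hr.symm.one_sub_inv]
  ring

theorem exists_rpow_mul_eq_rpow_neg_mul {a b α u v : ℝ} (ha : 0 < a) (hb : 0 < b)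
    (hα : α * (a + b) = a) (hu : 0 < u) (hv : 0 < v) :
    ∃ R > 0, R ^ a * u = v ^ α * u ^ (1 - α) ∧ R ^ (-b) * v = v ^ α * u ^ (1 - α) := by
  have hab : a + b ≠ 0 := by positivity
  obtain rfl : α = a / (a + b) := by rw [eq_div_iff hab, hα]
  refine ⟨v ^ (1 / (a + b)) * u ^ (-1 / (a + b)), by positivity, ?_, ?_⟩
  · rw [mul_rpow (by positivity) (by positivity), ← rpow_mul hv.le, ← rpow_mul hu.le, mul_assoc,
      ← rpow_add_one hu.ne']
    congr 2
    · field_simp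
    · field_simp
      ring
  · rw [mul_rpow (by positivity) (by positivity), ← rpow_mul hv.le, ← rpow_mul hu.le,
      mul_right_comm, ← rpow_add_one hv.ne']
    congr 2
    · field_simp
      ring
    · field_simp
      ring

section Radial

variable {E : Type*} [NormedAddCommGroup E] [NormedSpace ℝ E] [FiniteDimensional ℝ E]
  [MeasurableSpace E] [BorelSpace E] [Nontrivial E] (μ : Measure E) [μ.IsAddHaarMeasure]

theorem lintegral_fun_norm_addHaar {f : ℝ → ℝ≥0∞} (hf : Measurable f) :
    ∫⁻ x, f ‖x‖ ∂μ = Module.finrank ℝ E * μ (ball 0 1) *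
      ∫⁻ y in Ioi (0 : ℝ), ENNReal.ofReal (y ^ (Module.finrank ℝ E - 1)) * f y := by
  calc ∫⁻ x, f ‖x‖ ∂μ
      = ∫⁻ x : ({(0 : E)}ᶜ : Set E), f ‖x.1‖ ∂(μ.comap (↑)) := by
        rw [lintegral_subtype_comap (measurableSet_singleton _).compl fun x => f ‖x‖,
          restrict_compl_singleton]
    _ = ∫⁻ x, f x.2 ∂(μ.toSphere.prod (.volumeIoiPow (Module.finrank ℝ E - 1))) := by
        simpa using (μ.measurePreserving_homeomorphUnitSphereProd.lintegral_comp_emb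
          (Homeomorph.measurableEmbedding _) (f ∘ Subtype.val ∘ Prod.snd))
    _ = _ := by
        rw [lintegral_prod (fun z : sphere (0 : E) 1 × Ioi (0 : ℝ) => f z.2)
          (hf.comp (measurable_subtype_coe.comp measurable_snd)).aemeasurable]
        simp only [lintegral_const, Measure.volumeIoiPow, Measure.toSphere_apply_univ]
        rw [lintegral_withDensity_eq_lintegral_mul _ (by fun_prop)
          (g := fun y : Ioi (0 : ℝ) => f y) (by fun_prop), Pi.mul_def,
          lintegral_subtype_comap measurableSet_Ioi
            (fun a : ℝ => ENNReal.ofReal (a ^ (Module.finrank ℝ E - 1)) * f a)]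
        ring

theorem setLIntegral_norm_preimage_addHaar {T : Set ℝ} (hT : MeasurableSet T) {f : ℝ → ℝ≥0∞}
    (hf : Measurable f) :
    ∫⁻ x in (‖·‖) ⁻¹' T, f ‖x‖ ∂μ = Module.finrank ℝ E * μ (ball 0 1) *
      ∫⁻ y in T ∩ Ioi 0, ENNReal.ofReal (y ^ (Module.finrank ℝ E - 1)) * f y := by
  rw [← lintegral_indicator (hT.preimage measurable_norm)]
  simp_rw [← Function.comp_apply (f := f) (g := (‖·‖)), indicator_comp_right]
  rw [lintegral_fun_norm_addHaar μ (hf.indicator hT), ← setLIntegral_indicator hT]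
  simp_rw [indicator_mul_right]

theorem setLIntegral_closedBall_norm_rpow {t R : ℝ} (ht : -(Module.finrank ℝ E : ℝ) < t)
    (hR : 0 ≤ R) :
    ∫⁻ x in closedBall 0 R, ENNReal.ofReal (‖x‖ ^ t) ∂μ = Module.finrank ℝ E * μ (ball 0 1) *
      ENNReal.ofReal (R ^ (t + Module.finrank ℝ E) / (t + Module.finrank ℝ E)) := by
  have hd := Module.finrank_pos (R := ℝ) (M := E)
  have hball : closedBall (0 : E) R = (‖·‖) ⁻¹' Iic R := by ext; simp
  rw [hball, setLIntegral_norm_preimage_addHaar μ measurableSet_Iic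
      (f := fun y => ENNReal.ofReal (y ^ t)) (by fun_prop), Iic_inter_Ioi,
    setLIntegral_congr_fun measurableSet_Ioc fun y hy => ofReal_pow_mul_ofReal_rpow hy.1 _ t,
    lintegral_Ioc_zero_rpow (by push_cast [Nat.cast_pred hd]; linarith) hR]
  push_cast [Nat.cast_pred hd]
  ring_nf

theorem setLIntegral_compl_closedBall_norm_rpow {t R : ℝ} (ht : t < -(Module.finrank ℝ E : ℝ))
    (hR : 0 < R) :
    ∫⁻ x in (closedBall 0 R)ᶜ, ENNReal.ofReal (‖x‖ ^ t) ∂μ = Module.finrank ℝ E * μ (ball 0 1) *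
      ENNReal.ofReal (-R ^ (t + Module.finrank ℝ E) / (t + Module.finrank ℝ E)) := by
  have hd := Module.finrank_pos (R := ℝ) (M := E)
  have hball : (closedBall (0 : E) R)ᶜ = (‖·‖) ⁻¹' Ioi R := by ext; simp
  rw [hball, setLIntegral_norm_preimage_addHaar μ measurableSet_Ioi
      (f := fun y => ENNReal.ofReal (y ^ t)) (by fun_prop), Ioi_inter_Ioi,
    max_eq_left hR.le,
    setLIntegral_congr_fun measurableSet_Ioi fun y hy =>
      ofReal_pow_mul_ofReal_rpow (hR.trans hy) _ t,
    lintegral_Ioi_rpow (by push_cast [Nat.cast_pred hd]; linarith) hR]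
  push_cast [Nat.cast_pred hd]
  ring_nf

end Radial

section Seminormed

variable {E F : Type*} [SeminormedAddCommGroup E] [NormedAddCommGroup F]

theorem closedBall_eq_sub_preimage (x : E) (R : ℝ) :
    closedBall x R = (x - ·) ⁻¹' closedBall 0 R := by
  ext y
  rw [mem_preimage, mem_closedBall, mem_closedBall_zero_iff, dist_eq_norm']

theorem ofReal_inv_norm_rpow (z : E) {r : ℝ} (hr : 0 ≤ r) :
    ENNReal.ofReal ‖z‖⁻¹ ^ r = ENNReal.ofReal (‖z‖ ^ (-r)) := by
  rw [ofReal_rpow_of_nonneg (by positivity) hr, inv_rpow (norm_nonneg z), rpow_neg (norm_nonneg z)]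

theorem lintegral_compl_closedBall_inv_norm_mul_le [MeasurableSpace E] [OpensMeasurableSpace E]
    (μ : Measure E) (ω : E → F) (x : E) {R : ℝ} (hR : 0 < R) :
    ∫⁻ y in (closedBall x R)ᶜ, ENNReal.ofReal ‖x - y‖⁻¹ * ‖ω y‖ₑ ∂μ ≤
      ENNReal.ofReal R⁻¹ * eLpNorm ω 1 μ :=
  calc ∫⁻ y in (closedBall x R)ᶜ, ENNReal.ofReal ‖x - y‖⁻¹ * ‖ω y‖ₑ ∂μ
      ≤ ∫⁻ y in (closedBall x R)ᶜ, ENNReal.ofReal R⁻¹ * ‖ω y‖ₑ ∂μ := by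
        refine setLIntegral_mono' measurableSet_closedBall.compl fun y hy => ?_
        have hRy : R < ‖x - y‖ := by simpa [dist_eq_norm'] using hy
        gcongr
    _ ≤ ENNReal.ofReal R⁻¹ * eLpNorm ω 1 μ := by
        rw [lintegral_const_mul' _ _ ofReal_ne_top, eLpNorm_one_eq_lintegral_enorm]
        exact mul_le_mul_right (setLIntegral_le_lintegral _ _) _

end Seminormed

section Convolution

variable {G : Type*} [MeasurableSpace G] [AddGroup G] [MeasurableAdd G] [MeasurableNeg G]
  {μ : Measure G} [μ.IsAddLeftInvariant] [μ.IsNegInvariant] {F : Type*} [NormedAddCommGroup F]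

theorem setLIntegral_sub_preimage_mul_le {r r' : ℝ} (hr : r.HolderConjugate r') {k : G → ℝ≥0∞}
    (hk : Measurable k) {ω : G → F} (hω : AEStronglyMeasurable ω μ) (x : G) (S : Set G) :
    ∫⁻ y in (x - ·) ⁻¹' S, k (x - y) * ‖ω y‖ₑ ∂μ ≤
      (∫⁻ z in S, k z ^ r ∂μ) ^ (1 / r) * eLpNorm ω (ENNReal.ofReal r') μ := by
  have hsub := (MeasurableEquiv.subLeft x).measurableEmbedding
  calc ∫⁻ y in (x - ·) ⁻¹' S, k (x - y) * ‖ω y‖ₑ ∂μ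
      ≤ (∫⁻ y in (x - ·) ⁻¹' S, k (x - y) ^ r ∂μ) ^ (1 / r) *
          (∫⁻ y in (x - ·) ⁻¹' S, ‖ω y‖ₑ ^ r' ∂μ) ^ (1 / r') :=
        ENNReal.lintegral_mul_le_Lp_mul_Lq _ hr (hk.comp hsub.measurable).aemeasurable
          hω.enorm.restrict
    _ ≤ _ := by
        rw [(Measure.measurePreserving_sub_left μ x).setLIntegral_comp_preimage_emb hsub
          (fun z => k z ^ r),
          eLpNorm_eq_lintegral_rpow_enorm_toReal (by simpa using hr.symm.pos) ofReal_ne_top,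
          toReal_ofReal hr.symm.nonneg]
        gcongr
        · exact hr.symm.one_div_nonneg
        · exact Measure.restrict_le_self

end Convolution

section Kernel

variable {F : Type*} [NormedAddCommGroup F]

theorem lintegral_closedBall_inv_norm_rpow {r R : ℝ} (hr0 : 0 < r) (hr : r < 2) (hR : 0 ≤ R) :
    ∫⁻ z in closedBall (0 : EuclideanSpace ℝ (Fin 2)) R, ENNReal.ofReal ‖z‖⁻¹ ^ r =
      ENNReal.ofReal (2 * π / (2 - r) * R ^ (2 - r)) := by
  simp_rw [ofReal_inv_norm_rpow _ hr0.le]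
  rw [setLIntegral_closedBall_norm_rpow volume (by simp; linarith) hR]
  simp only [finrank_euclideanSpace_fin, EuclideanSpace.volume_ball_fin_two, Nat.cast_ofNat]
  rw [ofReal_one, one_pow, one_mul, ← ofReal_ofNat, ← ofReal_mul (by norm_num),
    ← ofReal_mul (by positivity)]
  congr 1
  ring_nf

theorem lintegral_compl_closedBall_inv_norm_rpow {r R : ℝ} (hr : 2 < r) (hR : 0 < R) :
    ∫⁻ z in (closedBall (0 : EuclideanSpace ℝ (Fin 2)) R)ᶜ, ENNReal.ofReal ‖z‖⁻¹ ^ r =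
      ENNReal.ofReal (2 * π / (r - 2) * R ^ (2 - r)) := by
  simp_rw [ofReal_inv_norm_rpow _ (by linarith : (0 : ℝ) ≤ r)]
  rw [setLIntegral_compl_closedBall_norm_rpow volume (by simp; linarith) hR]
  simp only [finrank_euclideanSpace_fin, EuclideanSpace.volume_ball_fin_two, Nat.cast_ofNat]
  rw [ofReal_one, one_pow, one_mul, ← ofReal_ofNat, ← ofReal_mul (by norm_num),
    ← ofReal_mul (by positivity)]
  congr 1
  rw [show -r + 2 = -(r - 2) by ring, div_neg, neg_div, neg_neg, neg_sub]
  ring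

theorem exists_lintegral_closedBall_inv_norm_mul_le {q : ℝ} (hq : 2 < q) :
    ∃ c > 0, ∀ ω : EuclideanSpace ℝ (Fin 2) → F, AEStronglyMeasurable ω volume → ∀ x, ∀ R > 0,
      ∫⁻ y in closedBall x R, ENNReal.ofReal ‖x - y‖⁻¹ * ‖ω y‖ₑ ≤
        ENNReal.ofReal (c * R ^ (1 - 2 / q)) * eLpNorm ω (ENNReal.ofReal q) volume := by
  set r := q.conjExponent
  have hr : r.HolderConjugate q := (Real.HolderConjugate.conjExponent (by linarith)).symm
  have hr2 : r < 2 := by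
    rw [hr.symm.conjugate_eq, div_lt_iff₀ (by linarith)]
    linarith
  refine ⟨(2 * π / (2 - r)) ^ (1 / r), by have := hr.pos; bound, fun ω hω x R hR => ?_⟩
  calc ∫⁻ y in closedBall x R, ENNReal.ofReal ‖x - y‖⁻¹ * ‖ω y‖ₑ
      ≤ (∫⁻ z in closedBall (0 : EuclideanSpace ℝ (Fin 2)) R, ENNReal.ofReal ‖z‖⁻¹ ^ r) ^ (1 / r) *
          eLpNorm ω (ENNReal.ofReal q) volume := by
        rw [closedBall_eq_sub_preimage]
        exact setLIntegral_sub_preimage_mul_le hr (by fun_prop) hω x _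
    _ = _ := by
        rw [lintegral_closedBall_inv_norm_rpow hr.pos hr2 hR.le,
          ofReal_mul_rpow_rpow_one_div (by have := hr.pos; bound) hR.le hr.pos,
          hr.two_sub_div_eq]

theorem exists_lintegral_compl_closedBall_inv_norm_mul_le {p : ℝ} (hp : 1 ≤ p) (hp2 : p < 2) :
    ∃ c > 0, ∀ ω : EuclideanSpace ℝ (Fin 2) → F, AEStronglyMeasurable ω volume → ∀ x, ∀ R > 0,
      ∫⁻ y in (closedBall x R)ᶜ, ENNReal.ofReal ‖x - y‖⁻¹ * ‖ω y‖ₑ ≤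
        ENNReal.ofReal (c * R ^ (1 - 2 / p)) * eLpNorm ω (ENNReal.ofReal p) volume := by
  rcases hp.eq_or_lt with rfl | hp1
  · refine ⟨1, one_pos, fun ω _ x R hR => ?_⟩
    convert lintegral_compl_closedBall_inv_norm_mul_le volume ω x hR using 3
    · norm_num [Real.rpow_neg_one]
    · simp
  set r := p.conjExponent
  have hr : r.HolderConjugate p := (Real.HolderConjugate.conjExponent hp1).symm
  have hr2 : 2 < r := by
    rw [hr.symm.conjugate_eq, lt_div_iff₀ (by linarith)]
    linarith
  refine ⟨(2 * π / (r - 2)) ^ (1 / r), by bound, fun ω hω x R hR => ?_⟩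
  calc ∫⁻ y in (closedBall x R)ᶜ, ENNReal.ofReal ‖x - y‖⁻¹ * ‖ω y‖ₑ
      ≤ (∫⁻ z in (closedBall (0 : EuclideanSpace ℝ (Fin 2)) R)ᶜ, ENNReal.ofReal ‖z‖⁻¹ ^ r) ^
            (1 / r) *
          eLpNorm ω (ENNReal.ofReal p) volume := by
        rw [closedBall_eq_sub_preimage, ← preimage_compl]
        exact setLIntegral_sub_preimage_mul_le hr (by fun_prop) hω x _
    _ = _ := by
        rw [lintegral_compl_closedBall_inv_norm_rpow hr2 hR,
          ofReal_mul_rpow_rpow_one_div (by bound) hR.le hr.pos,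
          hr.two_sub_div_eq]

theorem exists_lintegral_inv_norm_mul_le {p q α : ℝ}
    (hp : 1 ≤ p) (hp2 : p < 2) (h2q : 2 < q) (hαpq : 1 / 2 = α / p + (1 - α) / q) :
    ∃ C > 0, ∀ ω : EuclideanSpace ℝ (Fin 2) → F,
      MemLp ω (ENNReal.ofReal p) volume → MemLp ω (ENNReal.ofReal q) volume → ∀ x,
        ∫⁻ y, ENNReal.ofReal ‖x - y‖⁻¹ * ‖ω y‖ₑ ≤
          ENNReal.ofReal (C * (eLpNorm ω (ENNReal.ofReal p) volume).toReal ^ α *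
            (eLpNorm ω (ENNReal.ofReal q) volume).toReal ^ (1 - α)) := by
  obtain ⟨cN, hcN, hnear⟩ := exists_lintegral_closedBall_inv_norm_mul_le (F := F) h2q
  obtain ⟨cF, hcF, hfar⟩ := exists_lintegral_compl_closedBall_inv_norm_mul_le (F := F) hp hp2
  refine ⟨cN + cF, by positivity, fun ω hωp hωq x => ?_⟩
  by_cases hω0 : ω =ᵐ[volume] 0
  · have hzero : (fun y => ENNReal.ofReal ‖x - y‖⁻¹ * ‖ω y‖ₑ) =ᵐ[volume] 0 :=
      hω0.mono fun y hy => by simp [hy]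
    simp [lintegral_congr_ae hzero]
  have hnorm_pos {r : ℝ} (hr : 0 < r) (hωr : MemLp ω (ENNReal.ofReal r) volume) :
      0 < (eLpNorm ω (ENNReal.ofReal r) volume).toReal :=
    toReal_pos (fun h => hω0 ((eLpNorm_eq_zero_iff hωr.1 (by simpa using hr)).1 h))
      hωr.eLpNorm_ne_top
  have hsplit : ∀ R > 0, ∫⁻ y, ENNReal.ofReal ‖x - y‖⁻¹ * ‖ω y‖ₑ ≤
      ENNReal.ofReal (cN * (R ^ (1 - 2 / q) * (eLpNorm ω (ENNReal.ofReal q) volume).toReal) +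
        cF * (R ^ (1 - 2 / p) * (eLpNorm ω (ENNReal.ofReal p) volume).toReal)) := by
    intro R hR
    rw [← lintegral_add_compl _ (measurableSet_closedBall (x := x) (ε := R))]
    refine (add_le_add (hnear ω hωq.1 x R hR) (hfar ω hωp.1 x R hR)).trans_eq ?_
    conv_lhs => rw [← ofReal_toReal hωq.eLpNorm_ne_top, ← ofReal_toReal hωp.eLpNorm_ne_top]
    rw [← ofReal_mul (by positivity), ← ofReal_mul (by positivity), ← ofReal_add (by positivity)
        (by positivity)]
    ring_nf
  have ha : 0 < 1 - 2 / q := by rw [sub_pos, div_lt_one]; all_goals linarith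
  have hb : 0 < 2 / p - 1 := by rw [sub_pos, one_lt_div]; all_goals linarith
  have hα : α * ((1 - 2 / q) + (2 / p - 1)) = 1 - 2 / q := by linear_combination (-2) * hαpq
  obtain ⟨R, hR, hRnear, hRfar⟩ := exists_rpow_mul_eq_rpow_neg_mul ha hb hα
    (hnorm_pos (by linarith) hωq) (hnorm_pos (by linarith) hωp)
  rw [show -(2 / p - 1) = 1 - 2 / p by ring] at hRfar
  refine (hsplit R hR).trans_eq ?_
  rw [hRnear, hRfar]
  congr 1
  ring

end Kernel

theorem integrable_and_integral_le_of_lintegral_ofReal_le {X : Type*} [MeasurableSpace X]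
    {μ : Measure X} {f : X → ℝ} {B : ℝ} (hf : AEStronglyMeasurable f μ) (hf0 : 0 ≤ᵐ[μ] f)
    (hB : 0 ≤ B) (h : ∫⁻ a, ENNReal.ofReal (f a) ∂μ ≤ ENNReal.ofReal B) :
    Integrable f μ ∧ ∫ a, f a ∂μ ≤ B :=
  ⟨⟨hf, (hasFiniteIntegral_iff_ofReal hf0).2 (h.trans_lt ofReal_lt_top)⟩,
    (integral_eq_lintegral_of_nonneg_ae hf0 hf).trans_le (toReal_le_of_le_ofReal hB h)⟩

theorem norm_biotSavartKernel (x : EuclideanSpace ℝ (Fin 2)) :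
    ‖biotSavartKernel x‖ = (2 * π)⁻¹ * ‖x‖⁻¹ := by
  have hperp : ‖(WithLp.equiv 2 (Fin 2 → ℝ)).symm ![-(x 1), x 0]‖ = ‖x‖ := by
    simp [EuclideanSpace.norm_eq, Fin.sum_univ_two, add_comm]
  rcases eq_or_ne x 0 with rfl | hx
  · simp [biotSavartKernel]
  · rw [biotSavartKernel, norm_smul, hperp, norm_inv, norm_of_nonneg (by positivity)]
    field_simp [norm_ne_zero_iff.2 hx]

theorem biotSavart_linfty_bound_general (p q α : ℝ) (hp : 1 ≤ p) (hp2 : p < 2) (h2q : 2 < q)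
    (hαpq : 1 / 2 = α / p + (1 - α) / q) :
    ∃ C > 0, ∀ ω : EuclideanSpace ℝ (Fin 2) → ℝ,
      MemLp ω (ENNReal.ofReal p) volume → MemLp ω (ENNReal.ofReal q) volume →
      ∀ x : EuclideanSpace ℝ (Fin 2),
        Integrable (fun y => ‖biotSavartKernel (x - y)‖ * |ω y|) volume ∧
        (∫ y, ‖biotSavartKernel (x - y)‖ * |ω y|) ≤
          C * (eLpNorm ω (ENNReal.ofReal p) volume).toReal ^ α *
            (eLpNorm ω (ENNReal.ofReal q) volume).toReal ^ (1 - α) ∧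
        ‖∫ y, ω y • biotSavartKernel (x - y)‖ ≤
          C * (eLpNorm ω (ENNReal.ofReal p) volume).toReal ^ α *
            (eLpNorm ω (ENNReal.ofReal q) volume).toReal ^ (1 - α) := by
  obtain ⟨C, hC, hbound⟩ := exists_lintegral_inv_norm_mul_le (F := ℝ) hp hp2 h2q hαpq
  refine ⟨(2 * π)⁻¹ * C, by positivity, fun ω hωp hωq x => ?_⟩
  have hlintegral : ∫⁻ y, ENNReal.ofReal (‖biotSavartKernel (x - y)‖ * |ω y|) ≤
      ENNReal.ofReal ((2 * π)⁻¹ * C * (eLpNorm ω (ENNReal.ofReal p) volume).toReal ^ α *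
        (eLpNorm ω (ENNReal.ofReal q) volume).toReal ^ (1 - α)) := by
    calc ∫⁻ y, ENNReal.ofReal (‖biotSavartKernel (x - y)‖ * |ω y|)
        = ENNReal.ofReal (2 * π)⁻¹ * ∫⁻ y, ENNReal.ofReal ‖x - y‖⁻¹ * ‖ω y‖ₑ := by
          rw [← lintegral_const_mul' _ _ ofReal_ne_top]
          congr with y
          rw [norm_biotSavartKernel, mul_assoc, ofReal_mul (by positivity),
            ofReal_mul (by positivity), Real.enorm_eq_ofReal_abs]
      _ ≤ ENNReal.ofReal (2 * π)⁻¹ * ENNReal.ofReal (C *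
            (eLpNorm ω (ENNReal.ofReal p) volume).toReal ^ α *
              (eLpNorm ω (ENNReal.ofReal q) volume).toReal ^ (1 - α)) :=
          mul_le_mul_right (hbound ω hωp hωq x) _
      _ = _ := by
          rw [← ofReal_mul (by positivity)]
          congr 1
          ring
  have hmeas : AEStronglyMeasurable (fun y => ‖biotSavartKernel (x - y)‖ * |ω y|) volume := by
    simp_rw [norm_biotSavartKernel]
    exact (by fun_prop : Measurable fun y : EuclideanSpace ℝ (Fin 2) =>
      (2 * π)⁻¹ * ‖x - y‖⁻¹).aestronglyMeasurable.mul hωp.1.norm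
  obtain ⟨hint, hle⟩ := integrable_and_integral_le_of_lintegral_ofReal_le hmeas
    (.of_forall fun y => by positivity) (by positivity) hlintegral
  refine ⟨hint, hle, (norm_integral_le_integral_norm _).trans ?_⟩
  simpa only [norm_smul, Real.norm_eq_abs, mul_comm] using hle

/-- `L^p`–`L^q` interpolation bound for the Biot–Savart velocity: if
`1 ≤ p < 2 < q < ∞` and `1/2 = α/p + (1-α)/q`, then for `ω ∈ L^p ∩ L^q` the
integral `∫ ‖K(x-y)‖ |ω y| dy` converges and
`‖(K ∗ ω)(x)‖ ≤ C ‖ω‖_p^α ‖ω‖_q^(1-α)`. -/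
theorem biotSavart_linfty_bound (p q α : ℝ) (hp : 1 ≤ p) (hp2 : p < 2) (h2q : 2 < q) (hα0 : 0 < α) (hα1 : α < 1)
    (hαpq : 1 / 2 = α / p + (1 - α) / q) :
    ∃ C > 0, ∀ ω : EuclideanSpace ℝ (Fin 2) → ℝ,
      MemLp ω (ENNReal.ofReal p) volume → MemLp ω (ENNReal.ofReal q) volume →
      ∀ x : EuclideanSpace ℝ (Fin 2),
        Integrable (fun y => ‖biotSavartKernel (x - y)‖ * |ω y|) volume ∧
        (∫ y, ‖biotSavartKernel (x - y)‖ * |ω y|) ≤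
          C * (eLpNorm ω (ENNReal.ofReal p) volume).toReal ^ α *
            (eLpNorm ω (ENNReal.ofReal q) volume).toReal ^ (1 - α) ∧
        ‖∫ y, ω y • biotSavartKernel (x - y)‖ ≤
          C * (eLpNorm ω (ENNReal.ofReal p) volume).toReal ^ α *
            (eLpNorm ω (ENNReal.ofReal q) volume).toReal ^ (1 - α) :=
  biotSavart_linfty_bound_general p q α hp hp2 h2q hαpq
end

section
/- Let R > 0 and let ω ∈ L¹(ℝ²) be supported in the closed ball of radius R centered at the origin, with ∫_{ℝ²} ω(y) dy = 0. Then there is a constant C (depending on ω and R) such that for every x ∈ ℝ² with ‖x‖ > 4R, the Biot–Savart velocity satisfies ‖(K ∗ ω)(x)‖ ≤ C / ‖x‖². (The leading far-field terms are -(1/(2π))‖x‖^{-2} ∫ y^⊥ ω(y) dy and -(1/(2π)) (x^⊥/‖x‖⁴) x·∫ y ω(y) dy, both of size ‖x‖^{-2}.) -/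
open MeasureTheory Real

noncomputable def perp : EuclideanSpace ℝ (Fin 2) →ₗᵢ[ℝ] EuclideanSpace ℝ (Fin 2) where
  toFun x := (WithLp.equiv 2 (Fin 2 → ℝ)).symm ![-(x 1), x 0]
  map_add' x y := by ext i; fin_cases i <;> simp [add_comm]
  map_smul' c x := by ext i; fin_cases i <;> simp
  norm_map' x := by simp [EuclideanSpace.norm_eq, Fin.sum_univ_two, add_comm]

lemma biotSavartKernel_eq_smul_perp (z : EuclideanSpace ℝ (Fin 2)) :
    biotSavartKernel z = (2 * π)⁻¹ • perp ((1 / ‖z‖) ^ 2 • z) := by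
  rw [map_smul, smul_smul, biotSavartKernel, one_div, inv_pow, mul_inv]
  rfl

lemma measurable_biotSavartKernel : Measurable biotSavartKernel :=
  ((measurable_norm.pow_const 2).const_mul (2 * π)).inv.smul perp.continuous.measurable

lemma norm_biotSavartKernel_sub {a b : EuclideanSpace ℝ (Fin 2)} (ha : a ≠ 0) (hb : b ≠ 0) :
    ‖biotSavartKernel a - biotSavartKernel b‖ = ‖a - b‖ / (2 * π * ‖a‖ * ‖b‖) := by
  rw [biotSavartKernel_eq_smul_perp, biotSavartKernel_eq_smul_perp, ← smul_sub, ← map_sub,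
    norm_smul, perp.norm_map, ← dist_eq_norm, dist_div_norm_sq_smul ha hb, dist_eq_norm,
    norm_inv, Real.norm_of_nonneg (by positivity)]
  field_simp

lemma norm_biotSavartKernel_sub_le {x y : EuclideanSpace ℝ (Fin 2)} (hy : 2 * ‖y‖ ≤ ‖x‖) :
    ‖biotSavartKernel (x - y) - biotSavartKernel x‖ ≤ ‖y‖ / (π * ‖x‖ ^ 2) := by
  rcases eq_or_ne y 0 with rfl | hy0
  · simp
  have hxy : ‖x‖ ≤ 2 * ‖x - y‖ := by linarith [norm_sub_norm_le x y]
  have hx : 0 < ‖x‖ := by linarith [norm_pos_iff.mpr hy0]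
  rw [norm_biotSavartKernel_sub (norm_pos_iff.mp (by linarith)) (norm_pos_iff.mp hx),
    sub_sub_cancel_left, norm_neg]
  apply div_le_div_of_nonneg_left (norm_nonneg y) (by positivity)
  nlinarith [mul_le_mul_of_nonneg_left hxy (by positivity : 0 ≤ π * ‖x‖)]

section SupportBound

variable {α E : Type*} [NormedAddCommGroup E] [NormedSpace ℝ E] {ω : α → ℝ} {f : α → E}
  {s : Set α} {M : ℝ}

lemma norm_smul_le_of_support_subset (hsupp : Function.support ω ⊆ s)
    (hf : ∀ y ∈ s, ‖f y‖ ≤ M) (y : α) : ‖ω y • f y‖ ≤ ‖ω y‖ * M := by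
  by_cases hy : y ∈ s
  · rw [norm_smul]
    exact mul_le_mul_of_nonneg_left (hf y hy) (norm_nonneg _)
  · simp [Function.notMem_support.mp fun h => hy (hsupp h)]

variable [MeasurableSpace α] {μ : Measure α}

lemma MeasureTheory.Integrable.smul_of_support_subset (hω : Integrable ω μ)
    (hfm : AEStronglyMeasurable f μ) (hsupp : Function.support ω ⊆ s) (hf : ∀ y ∈ s, ‖f y‖ ≤ M) :
    Integrable (fun y => ω y • f y) μ :=
  (hω.norm.mul_const M).mono' (hω.aestronglyMeasurable.smul hfm)
    (.of_forall (norm_smul_le_of_support_subset hsupp hf))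

lemma norm_integral_smul_le_of_support_subset (hω : Integrable ω μ)
    (hsupp : Function.support ω ⊆ s) (hf : ∀ y ∈ s, ‖f y‖ ≤ M) :
    ‖∫ y, ω y • f y ∂μ‖ ≤ (∫ y, ‖ω y‖ ∂μ) * M := by
  rw [← integral_mul_const]
  exact norm_integral_le_of_norm_le (hω.norm.mul_const M)
    (.of_forall (norm_smul_le_of_support_subset hsupp hf))

lemma integral_smul_eq_integral_smul_sub [CompleteSpace E] (hω : Integrable ω μ)
    (hω0 : ∫ y, ω y ∂μ = 0) (hωf : Integrable (fun y => ω y • f y) μ) (v : E) :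
    ∫ y, ω y • f y ∂μ = ∫ y, ω y • (f y - v) ∂μ := by
  simp_rw [smul_sub]
  rw [integral_sub hωf (hω.smul_const v), integral_smul_const, hω0, zero_smul, sub_zero]

end SupportBound

/-- Far-field decay of the Biot–Savart velocity of a compactly supported, mean-zero
vorticity: `‖(K ∗ ω)(x)‖ ≤ C/‖x‖²` for `‖x‖ > 4R`. -/
theorem biotSavart_farfield_decay (R : ℝ) (hR : 0 < R)
    (ω : EuclideanSpace ℝ (Fin 2) → ℝ) (hL1 : Integrable ω volume)
    (hsupp : Function.support ω ⊆ Metric.closedBall 0 R)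
    (hmean : (∫ y, ω y) = 0) :
    ∃ C > 0, ∀ x : EuclideanSpace ℝ (Fin 2), 4 * R < ‖x‖ →
      ‖∫ y, ω y • biotSavartKernel (x - y)‖ ≤ C / ‖x‖ ^ 2 := by
  have hω1 : 0 ≤ ∫ y, ‖ω y‖ := integral_nonneg fun _ => norm_nonneg _
  refine ⟨R * ((∫ y, ‖ω y‖) + 1) / π, by positivity, fun x hx => ?_⟩
  have hdiff : ∀ y ∈ Metric.closedBall 0 R,
      ‖biotSavartKernel (x - y) - biotSavartKernel x‖ ≤ R / (π * ‖x‖ ^ 2) := by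
    intro y hy
    rw [mem_closedBall_zero_iff] at hy
    exact (norm_biotSavartKernel_sub_le (by linarith)).trans (by gcongr)
  have hbound : ∀ y ∈ Metric.closedBall 0 R,
      ‖biotSavartKernel (x - y)‖ ≤ ‖biotSavartKernel x‖ + R / (π * ‖x‖ ^ 2) := fun y hy =>
    (norm_le_norm_add_norm_sub' _ _).trans (add_le_add_right (hdiff y hy) _)
  have hint : Integrable fun y => ω y • biotSavartKernel (x - y) := hL1.smul_of_support_subset
    (measurable_biotSavartKernel.comp (measurable_const.sub measurable_id)).aestronglyMeasurable
    hsupp hbound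
  rw [integral_smul_eq_integral_smul_sub hL1 hmean hint (biotSavartKernel x)]
  calc _ ≤ (∫ y, ‖ω y‖) * (R / (π * ‖x‖ ^ 2)) :=
        norm_integral_smul_le_of_support_subset hL1 hsupp hdiff
    _ ≤ ((∫ y, ‖ω y‖) + 1) * (R / (π * ‖x‖ ^ 2)) := by gcongr; linarith
    _ = R * ((∫ y, ‖ω y‖) + 1) / π / ‖x‖ ^ 2 := by field_simp
end
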